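/- arXiv:2605.04783 — 2 statements merged into one kernel-verified Lean document; each statement's English description precedes it below -/
import Mathlib

section
/- Let (P,Q,R) be a k-admissible triple with P on vertex set A and Q on vertex set B, each with e(P) = e(Q) = f(k−1,k−1). Then for n ≥ |A| + |B|, the number of edges of H_n(P,Q,R) equals ⌊n²/4⌋ − |A||B| + e(R) + 2f(k−1,k−1), and the number of triangles in H_n(P,Q,R) equals f(k−1,k−1)(n − |A| − |B|) + N(K_3,P) + N(K_3,Q) + τ_R(P,Q), where τ_R(P,Q) = Σ_{aa'∈E(P)} |N_R(a)∩N_R(a')| + Σ_{bb'∈E(Q)} |N_R(b)∩N_R(b')|. -/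
open SimpleGraph

/-- The matching number of `G` restricted to a vertex subset `S`. -/
noncomputable def nuOn {V : Type*} (G : SimpleGraph V) (S : Set V) : ℕ :=
  sSup {n | ∃ M : G.Subgraph, M.IsMatching ∧ M.verts ⊆ S ∧ M.edgeSet.ncard = n}

/-- The matching number `ν(G)`. -/
noncomputable def nu {V : Type*} (G : SimpleGraph V) : ℕ := nuOn G Set.univ

/-- The friendship graph `F_k`: `k` triangles sharing the common center `none`. -/
def friendshipGraph (k : ℕ) : SimpleGraph (Option (Fin k × Fin 2)) :=
  SimpleGraph.fromRel (fun a b => a = none ∨ b = none ∨ ∃ i, a = some (i, 0) ∧ b = some (i, 1))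

/-- `G` contains no copy of the friendship graph `F_k`. -/
def FkFree (k : ℕ) {V : Type*} (G : SimpleGraph V) : Prop :=
  ∀ f : friendshipGraph k →g G, ¬ Function.Injective ⇑f

/-- The Chvátal–Hanson value `f(k-1,k-1)`. -/
def fCH (k : ℕ) : ℕ := if Odd k then k * (k - 1) else k * (2 * k - 3) / 2

/-- The graph `H_n(P,Q,R)`: internal edges `E(P) ∪ E(Q)`, crossing edges
`((X×Y) \ (A×B)) ∪ E(R)`. -/
def Hconstr {V : Type*} (X Y A B : Set V) (P Q R : SimpleGraph V) : SimpleGraph V :=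
  SimpleGraph.fromRel (fun u v =>
    P.Adj u v ∨ Q.Adj u v ∨ R.Adj u v ∨ (u ∈ X ∧ v ∈ Y ∧ ¬(u ∈ A ∧ v ∈ B)))

/-!
Since `X` and `Y` are complementary, `H = H_n(P,Q,R)` is the union of the edge-disjoint graphs
`P`, `Q`, `R` and `K_{X,Y} \ K_{A,B}`, and balance gives `|X||Y| = ⌊n²/4⌋`. A triangle of `H`
has `0, 1, 2` or `3` vertices outside `X`. With none (all) it is a triangle of `P` (of `Q`); with
exactly one it is an edge `aa'` of `P` together with a common neighbour `y ∈ Y`, and these `y` are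
the vertices of `Y \ B` together with the common `R`-neighbours of `a` and `a'`, which lie in `B`.
Symmetrically for two vertices outside `X`, and summing over the `f(k-1,k-1)` edges of `P` and of
`Q` gives the triangle count.
-/

open Finset

theorem Nat.mul_eq_add_sq_div_four {a b : ℕ} (h₁ : a ≤ b + 1) (h₂ : b ≤ a + 1) :
    a * b = (a + b) ^ 2 / 4 := by
  obtain rfl | rfl | rfl : b = a ∨ b = a + 1 ∨ a = b + 1 := by omega
  all_goals symm; apply Nat.div_eq_of_lt_le <;> ring_nf <;> omega

theorem Finset.insert_sdiff_eq_singleton {α : Type*} [DecidableEq α] {s t : Finset α} {a : α}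
    (ha : a ∉ t) (hs : s ⊆ t) : insert a s \ t = {a} := by
  rw [insert_sdiff_of_notMem _ ha, sdiff_eq_empty_iff_subset.2 hs]; rfl

theorem Finset.insert_inter_eq_of_subset {α : Type*} [DecidableEq α] {s t : Finset α} {a : α}
    (ha : a ∉ t) (hs : s ⊆ t) : insert a s ∩ t = s := by
  rw [insert_inter_of_notMem ha, inter_eq_left.2 hs]

theorem SimpleGraph.mem_of_mem_edgeSet {V : Type*} {G : SimpleGraph V} {S : Set V}
    (hG : ∀ u v, G.Adj u v → u ∈ S) {e : Sym2 V} (he : e ∈ G.edgeSet) {u : V}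
    (hu : u ∈ e) : u ∈ S := by
  rw [← Sym2.other_spec hu, mem_edgeSet] at he
  exact hG _ _ he

theorem SimpleGraph.ncard_edgeSet_top_between {V : Type*} {s t : Set V} (h : Disjoint s t) :
    (between s t ⊤).edgeSet.ncard = s.ncard * t.ncard := by
  have hedges : (between s t ⊤).edgeSet = (fun p : V × V => s(p.1, p.2)) '' (s ×ˢ t) := by
    ext e
    induction e using Sym2.ind with
    | _ u v =>
      simp only [mem_edgeSet, between_adj, top_adj, Set.mem_image, Set.mem_prod, Prod.exists,
        Sym2.eq_iff]
      grind [Set.disjoint_left.1 h]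
  rw [hedges, Set.InjOn.ncard_image, Set.ncard_prod]
  rintro ⟨a, b⟩ hab ⟨c, d⟩ hcd heq
  simp only [Set.mem_prod] at hab hcd
  rcases Sym2.eq_iff.1 heq with ⟨rfl, rfl⟩ | ⟨rfl, rfl⟩
  · rfl
  · exact absurd hcd.2 (Set.disjoint_left.1 h hab.1)

section Triangles

variable {V : Type*} [Fintype V] [DecidableEq V] {H P Q : SimpleGraph V}
  [DecidableRel H.Adj] [DecidableRel P.Adj] [DecidableRel Q.Adj] {X : Finset V}

theorem filter_subset_cliqueFinset_eq_of_adj_iff {n : ℕ} (hn : 2 ≤ n)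
    (hP : ∀ u v, P.Adj u v ↔ H.Adj u v ∧ u ∈ X ∧ v ∈ X) :
    {t ∈ H.cliqueFinset n | t ⊆ X} = P.cliqueFinset n := by
  ext t
  simp only [mem_filter, mem_cliqueFinset_iff, isNClique_iff, isClique_iff, Set.Pairwise, mem_coe]
  constructor
  · rintro ⟨⟨hcl, hcard⟩, htX⟩
    exact ⟨fun u hu v hv huv => (hP u v).2 ⟨hcl hu hv huv, htX hu, htX hv⟩, hcard⟩
  · rintro ⟨hcl, hcard⟩
    have htX : t ⊆ X := fun u hu => by
      obtain ⟨v, hv, hvu⟩ := exists_mem_ne (by omega : 1 < #t) u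
      exact ((hP u v).1 (hcl hu hv hvu.symm)).2.1
    exact ⟨⟨fun u hu v hv huv => ((hP u v).1 (hcl hu hv huv)).1, hcard⟩, htX⟩

theorem card_filter_card_sdiff_eq_one_cliqueFinset_three_of_adj_iff
    (hP : ∀ u v, P.Adj u v ↔ H.Adj u v ∧ u ∈ X ∧ v ∈ X) :
    #{t ∈ H.cliqueFinset 3 | #(t \ X) = 1} =
      ∑ e ∈ P.edgeFinset, #{y ∈ Xᶜ | ∀ u ∈ e, H.Adj u y} := by
  have hsub : ∀ e ∈ P.edgeFinset, e.toFinset ⊆ X := fun e he u hu =>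
    mem_of_mem_edgeSet (fun u v huv => ((hP u v).1 huv).2.1) (mem_edgeFinset.1 he)
      (Sym2.mem_toFinset.1 hu)
  rw [← card_sigma]
  refine (card_nbij (fun p => insert p.2 p.1.toFinset) ?_ ?_ ?_).symm
  · rintro ⟨e, y⟩ hp
    simp only [coe_sigma, Set.mem_sigma_iff, mem_coe, mem_filter, mem_compl] at hp
    obtain ⟨he, hy, hadj⟩ := hp
    simp only [coe_filter, Set.mem_ofPred_eq, mem_cliqueFinset_iff,
      insert_sdiff_eq_singleton hy (hsub e he), card_singleton, and_true]
    induction e using Sym2.ind with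
    | _ a b =>
      rw [mem_edgeFinset, mem_edgeSet] at he
      simp only [Sym2.mem_iff, forall_eq_or_imp, forall_eq] at hadj
      rw [Sym2.toFinset_mk_eq, is3Clique_iff]
      exact ⟨y, a, b, hadj.1.symm, hadj.2.symm, ((hP a b).1 he).1, rfl⟩
  · rintro ⟨e, y⟩ hp ⟨e', y'⟩ hp' heq
    simp only [coe_sigma, Set.mem_sigma_iff, mem_coe, mem_filter, mem_compl] at hp hp' heq
    obtain rfl : y = y' := singleton_injective <| by
      rw [← insert_sdiff_eq_singleton hp.2.1 (hsub e hp.1), heq,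
        insert_sdiff_eq_singleton hp'.2.1 (hsub e' hp'.1)]
    obtain rfl : e = e' := Sym2.ext fun x => by
      rw [← Sym2.mem_toFinset, ← Sym2.mem_toFinset,
        ← insert_inter_eq_of_subset hp.2.1 (hsub e hp.1),
        ← insert_inter_eq_of_subset hp'.2.1 (hsub e' hp'.1), heq]
    rfl
  · intro t ht
    simp only [coe_filter, Set.mem_ofPred_eq, mem_cliqueFinset_iff] at ht
    obtain ⟨hcl, hcard⟩ := ht
    obtain ⟨y, hy⟩ := card_eq_one.1 hcard
    have hyt : y ∈ t ∧ y ∉ X := mem_sdiff.1 (hy ▸ mem_singleton_self y)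
    obtain ⟨a, b, hab, hab'⟩ : ∃ a b, a ≠ b ∧ t ∩ X = {a, b} := card_eq_two.1 <| by
      have := card_sdiff_add_card_inter t X
      rw [hcl.card_eq] at this
      omega
    have ha : a ∈ t ∧ a ∈ X := mem_inter.1 (hab' ▸ by simp)
    have hb : b ∈ t ∧ b ∈ X := mem_inter.1 (hab' ▸ by simp)
    refine ⟨⟨s(a, b), y⟩, ?_, ?_⟩
    · simp only [coe_sigma, Set.mem_sigma_iff, mem_coe, mem_filter, mem_compl, mem_edgeFinset,
        mem_edgeSet, Sym2.mem_iff, forall_eq_or_imp, forall_eq]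
      refine ⟨(hP a b).2 ⟨hcl.isClique ha.1 hb.1 hab, ha.2, hb.2⟩, hyt.2,
        hcl.isClique ha.1 hyt.1 ?_, hcl.isClique hb.1 hyt.1 ?_⟩
      · rintro rfl; exact hyt.2 ha.2
      · rintro rfl; exact hyt.2 hb.2
    · simp only [Sym2.toFinset_mk_eq]
      rw [← hab', insert_eq, ← hy, sdiff_union_inter]

theorem card_cliqueFinset_three_eq_of_adj_iff
    (hP : ∀ u v, P.Adj u v ↔ H.Adj u v ∧ u ∈ X ∧ v ∈ X)
    (hQ : ∀ u v, Q.Adj u v ↔ H.Adj u v ∧ u ∈ Xᶜ ∧ v ∈ Xᶜ) :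
    #(H.cliqueFinset 3) = #(P.cliqueFinset 3) + #(Q.cliqueFinset 3) +
      ∑ e ∈ P.edgeFinset, #{y ∈ Xᶜ | ∀ u ∈ e, H.Adj u y} +
      ∑ e ∈ Q.edgeFinset, #{x ∈ X | ∀ u ∈ e, H.Adj u x} := by
  have hsplit : ∀ t ∈ H.cliqueFinset 3, #(t \ X) + #(t \ Xᶜ) = 3 := fun t ht => by
    rw [sdiff_compl, inf_eq_inter, card_sdiff_add_card_inter, (mem_cliqueFinset_iff.1 ht).card_eq]
  have hfib := card_eq_sum_card_fiberwise (f := fun t => #(t \ X)) (t := range 4)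
    (s := H.cliqueFinset 3) fun t ht => by
      have := hsplit t ht
      simp only [mem_coe, mem_range]
      omega
  simp only [sum_range_succ, sum_range_zero, zero_add] at hfib
  have hfib0 : {t ∈ H.cliqueFinset 3 | #(t \ X) = 0} = {t ∈ H.cliqueFinset 3 | t ⊆ X} := by
    simp only [card_eq_zero, sdiff_eq_empty_iff_subset]
  have hfib2 :
      {t ∈ H.cliqueFinset 3 | #(t \ X) = 2} = {t ∈ H.cliqueFinset 3 | #(t \ Xᶜ) = 1} :=
    filter_congr fun t ht => by have := hsplit t ht; omega
  have hfib3 : {t ∈ H.cliqueFinset 3 | #(t \ X) = 3} = {t ∈ H.cliqueFinset 3 | t ⊆ Xᶜ} :=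
    filter_congr fun t ht => by
      rw [← sdiff_eq_empty_iff_subset, ← card_eq_zero]
      have := hsplit t ht
      omega
  rw [hfib, hfib0, hfib2, hfib3, filter_subset_cliqueFinset_eq_of_adj_iff (by norm_num) hP,
    filter_subset_cliqueFinset_eq_of_adj_iff (by norm_num) hQ,
    card_filter_card_sdiff_eq_one_cliqueFinset_three_of_adj_iff hP,
    card_filter_card_sdiff_eq_one_cliqueFinset_three_of_adj_iff hQ, compl_compl]
  ring

end Triangles

structure IsHconstrLayout {V : Type*} (X Y A B : Set V) (P Q R : SimpleGraph V) : Prop where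
  disjoint : Disjoint X Y
  subset_left : A ⊆ X
  subset_right : B ⊆ Y
  mem_of_adj_left : ∀ u v, P.Adj u v → u ∈ A ∧ v ∈ A
  mem_of_adj_right : ∀ u v, Q.Adj u v → u ∈ B ∧ v ∈ B
  mem_of_adj_cross : ∀ u v, R.Adj u v → (u ∈ A ∧ v ∈ B) ∨ (u ∈ B ∧ v ∈ A)

theorem Hconstr_comm {V : Type*} (X Y A B : Set V) (P Q R : SimpleGraph V) :
    Hconstr X Y A B P Q R = Hconstr Y X B A Q P R := by
  ext u v
  simp only [Hconstr, fromRel_adj]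
  tauto

namespace IsHconstrLayout

variable {V : Type*} {X Y A B : Set V} {P Q R : SimpleGraph V}
  (h : IsHconstrLayout X Y A B P Q R)
include h

theorem symm : IsHconstrLayout Y X B A Q P R where
  disjoint := h.disjoint.symm
  subset_left := h.subset_right
  subset_right := h.subset_left
  mem_of_adj_left := h.mem_of_adj_right
  mem_of_adj_right := h.mem_of_adj_left
  mem_of_adj_cross u v huv := (h.mem_of_adj_cross u v huv).symm

theorem adj_left_iff {u v : V} :
    P.Adj u v ↔ (Hconstr X Y A B P Q R).Adj u v ∧ u ∈ X ∧ v ∈ X := by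
  simp only [Hconstr, fromRel_adj]
  grind [Set.disjoint_left.1 h.disjoint, h.subset_left, h.subset_right, h.mem_of_adj_left,
    h.mem_of_adj_right, h.mem_of_adj_cross, Adj.symm, Adj.ne]

theorem Hconstr_adj_iff_of_mem {a y : V} (ha : a ∈ A) (hy : y ∈ Y) :
    (Hconstr X Y A B P Q R).Adj a y ↔ y ∉ B ∨ R.Adj a y := by
  simp only [Hconstr, fromRel_adj]
  grind [Set.disjoint_left.1 h.disjoint, h.subset_left, h.subset_right, h.mem_of_adj_left,
    h.mem_of_adj_right, h.mem_of_adj_cross, Adj.symm]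

theorem Hconstr_eq_sup :
    Hconstr X Y A B P Q R = P ⊔ Q ⊔ R ⊔ (between X Y ⊤ \ between A B ⊤) := by
  ext u v
  simp only [Hconstr, fromRel_adj, sup_adj, sdiff_adj, between_adj, top_adj]
  grind [Set.disjoint_left.1 h.disjoint, h.subset_left, h.subset_right, h.mem_of_adj_left,
    h.mem_of_adj_right, h.mem_of_adj_cross, Adj.symm, Adj.ne]

theorem ncard_edgeSet_Hconstr [Finite V] :
    (Hconstr X Y A B P Q R).edgeSet.ncard + A.ncard * B.ncard =
      X.ncard * Y.ncard + P.edgeSet.ncard + Q.edgeSet.ncard + R.edgeSet.ncard := by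
  have hPQ : Disjoint P Q := disjoint_left.2 fun u v huv huv' =>
    Set.disjoint_left.1 h.disjoint (h.subset_left (h.mem_of_adj_left u v huv).1)
      (h.subset_right (h.mem_of_adj_right u v huv').1)
  have hR : Disjoint (P ⊔ Q) R := disjoint_left.2 fun u v huv huv' => by
    have hAB := Set.disjoint_left.1 (h.disjoint.mono h.subset_left h.subset_right)
    rcases huv with hP | hQ <;> rcases h.mem_of_adj_cross u v huv' with ⟨hu, hv⟩ | ⟨hu, hv⟩
    · exact hAB (h.mem_of_adj_left u v hP).2 hv
    · exact hAB (h.mem_of_adj_left u v hP).1 hu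
    · exact hAB hu (h.mem_of_adj_right u v hQ).1
    · exact hAB hv (h.mem_of_adj_right u v hQ).2
  have hC : Disjoint (P ⊔ Q ⊔ R) (between X Y ⊤ \ between A B ⊤) :=
    disjoint_left.2 fun u v huv huv' => by
      simp only [sup_adj, sdiff_adj, between_adj, top_adj] at huv huv'
      grind [Set.disjoint_left.1 h.disjoint, h.subset_left, h.subset_right,
        h.mem_of_adj_left u v, h.mem_of_adj_right u v, h.mem_of_adj_cross u v]
  have hAB : between A B ⊤ ≤ between X Y ⊤ := fun u v huv => by
    simp only [between_adj] at huv ⊢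
    grind [h.subset_left, h.subset_right]
  have hcross : (between X Y ⊤ \ between A B ⊤).edgeSet.ncard + A.ncard * B.ncard =
      X.ncard * Y.ncard := by
    rw [edgeSet_sdiff, ← ncard_edgeSet_top_between h.disjoint,
      ← ncard_edgeSet_top_between (h.disjoint.mono h.subset_left h.subset_right),
      Set.ncard_sdiff_add_ncard_of_subset (edgeSet_mono hAB)]
  rw [h.Hconstr_eq_sup, edgeSet_sup, Set.ncard_union_eq (disjoint_edgeSet.2 hC), edgeSet_sup,
    Set.ncard_union_eq (disjoint_edgeSet.2 hR), edgeSet_sup,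
    Set.ncard_union_eq (disjoint_edgeSet.2 hPQ)]
  omega

theorem ncard_commonNeighbors_Hconstr [Finite V] {e : Sym2 V} (he : ∀ u ∈ e, u ∈ A) :
    {y ∈ Y | ∀ u ∈ e, (Hconstr X Y A B P Q R).Adj u y}.ncard + B.ncard =
      Y.ncard + {v | ∀ u ∈ e, R.Adj u v}.ncard := by
  have hRB : {v | ∀ u ∈ e, R.Adj u v} ⊆ B := fun v hv => by
    obtain ⟨a, ha⟩ : ∃ a, a ∈ e := ⟨_, Sym2.out_fst_mem e⟩
    rcases h.mem_of_adj_cross a v (hv a ha) with hav | ⟨haB, -⟩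
    · exact hav.2
    · exact absurd (h.subset_right haB) (Set.disjoint_left.1 h.disjoint (h.subset_left (he a ha)))
  have hcommon : ∀ y ∈ Y,
      (∀ u ∈ e, (Hconstr X Y A B P Q R).Adj u y) ↔ y ∉ B ∨ ∀ u ∈ e, R.Adj u y :=
    fun y hy => by
      rw [forall₂_congr fun u hu => h.Hconstr_adj_iff_of_mem (he u hu) hy]
      by_cases hyB : y ∈ B <;> simp [hyB]
  have hsplit : {y ∈ Y | ∀ u ∈ e, (Hconstr X Y A B P Q R).Adj u y} =
      (Y \ B) ∪ {v | ∀ u ∈ e, R.Adj u v} := by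
    ext y
    simp only [Set.mem_ofPred_eq, Set.mem_union, Set.mem_sdiff]
    constructor
    · rintro ⟨hy, hadj⟩
      exact ((hcommon y hy).1 hadj).imp (⟨hy, ·⟩) id
    · rintro (⟨hy, hyB⟩ | hR)
      · exact ⟨hy, (hcommon y hy).2 (Or.inl hyB)⟩
      · exact ⟨h.subset_right (hRB hR), (hcommon _ (h.subset_right (hRB hR))).2 (Or.inr hR)⟩
  rw [hsplit, Set.ncard_union_eq (Set.disjoint_sdiff_left.mono_right hRB), add_right_comm,
    Set.ncard_sdiff_add_ncard_of_subset h.subset_right]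

theorem sum_ncard_commonNeighbors_Hconstr [Finite V] (E : Finset (Sym2 V))
    (hE : ∀ e ∈ E, ∀ u ∈ e, u ∈ A) :
    ∑ e ∈ E, {y ∈ Y | ∀ u ∈ e, (Hconstr X Y A B P Q R).Adj u y}.ncard + #E * B.ncard =
      #E * Y.ncard + ∑ e ∈ E, {v | ∀ u ∈ e, R.Adj u v}.ncard := by
  rw [← smul_eq_mul, ← sum_const, ← sum_add_distrib, ← smul_eq_mul, ← sum_const,
    ← sum_add_distrib]
  exact sum_congr rfl fun e he => h.ncard_commonNeighbors_Hconstr (hE e he)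

end IsHconstrLayout

theorem IsHconstrLayout.ncard_cliqueSet_three_Hconstr {V : Type*} [Fintype V] [DecidableEq V]
    {X : Finset V} {A B : Set V} {P Q R : SimpleGraph V} [DecidableRel P.Adj]
    [DecidableRel Q.Adj] (h : IsHconstrLayout X ↑Xᶜ A B P Q R) :
    ((Hconstr X ↑Xᶜ A B P Q R).cliqueSet 3).ncard + #P.edgeFinset * B.ncard +
        #Q.edgeFinset * A.ncard =
      (P.cliqueSet 3).ncard + (Q.cliqueSet 3).ncard + #P.edgeFinset * #Xᶜ +
        #Q.edgeFinset * #X + ∑ e ∈ P.edgeFinset, {v | ∀ u ∈ e, R.Adj u v}.ncard +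
        ∑ e ∈ Q.edgeFinset, {v | ∀ u ∈ e, R.Adj u v}.ncard := by
  classical
  have hP : ∀ u v, P.Adj u v ↔ (Hconstr X ↑Xᶜ A B P Q R).Adj u v ∧ u ∈ X ∧ v ∈ X :=
    fun u v => h.adj_left_iff
  have hQ :
      ∀ u v, Q.Adj u v ↔ (Hconstr X ↑Xᶜ A B P Q R).Adj u v ∧ u ∈ Xᶜ ∧ v ∈ Xᶜ :=
    fun u v => by rw [Hconstr_comm]; exact h.symm.adj_left_iff
  have hτP := h.sum_ncard_commonNeighbors_Hconstr P.edgeFinset fun e he u hu =>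
    mem_of_mem_edgeSet (fun u v huv => (h.mem_of_adj_left u v huv).1) (mem_edgeFinset.1 he) hu
  have hτQ := h.symm.sum_ncard_commonNeighbors_Hconstr Q.edgeFinset fun e he u hu =>
    mem_of_mem_edgeSet (fun u v huv => (h.mem_of_adj_right u v huv).1) (mem_edgeFinset.1 he) hu
  rw [← Hconstr_comm, Set.ncard_coe_finset] at hτQ
  rw [Set.ncard_coe_finset] at hτP
  have hcoe : ∀ (S : Finset V) (p : V → Prop) [DecidablePred p],
      #{y ∈ S | p y} = {y | y ∈ (S : Set V) ∧ p y}.ncard := fun S p _ => by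
    rw [← Set.ncard_coe_finset, coe_filter]; rfl
  simp only [← coe_cliqueFinset, Set.ncard_coe_finset,
    card_cliqueFinset_three_eq_of_adj_iff hP hQ, hcoe]
  linarith

theorem Hconstr_counts_general {V : Type*} [Fintype V] [DecidableEq V] (k : ℕ)
    (X Y A B : Set V) (P Q R : SimpleGraph V)
    [DecidableRel P.Adj] [DecidableRel Q.Adj]
    (hpart : X ∪ Y = Set.univ) (hdisj : Disjoint X Y)
    (hbal : X.ncard ≤ Y.ncard + 1 ∧ Y.ncard ≤ X.ncard + 1)
    (hAX : A ⊆ X) (hBY : B ⊆ Y)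
    (hPA : ∀ u v, P.Adj u v → u ∈ A ∧ v ∈ A)
    (hQB : ∀ u v, Q.Adj u v → u ∈ B ∧ v ∈ B)
    (hRbip : ∀ u v, R.Adj u v → (u ∈ A ∧ v ∈ B) ∨ (u ∈ B ∧ v ∈ A))
    (heP : P.edgeSet.ncard = fCH k) (heQ : Q.edgeSet.ncard = fCH k) :
    (Hconstr X Y A B P Q R).edgeSet.ncard + A.ncard * B.ncard =
        (Fintype.card V) ^ 2 / 4 + R.edgeSet.ncard + 2 * fCH k ∧
      ((Hconstr X Y A B P Q R).cliqueSet 3).ncard + fCH k * (A.ncard + B.ncard) =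
        fCH k * Fintype.card V + ((P.cliqueSet 3).ncard + (Q.cliqueSet 3).ncard) +
          ((∑ e ∈ P.edgeFinset, ({v : V | ∀ u ∈ e, R.Adj u v}).ncard) +
            ∑ e ∈ Q.edgeFinset, ({v : V | ∀ u ∈ e, R.Adj u v}).ncard) := by
  have h : IsHconstrLayout X Y A B P Q R := ⟨hdisj, hAX, hBY, hPA, hQB, hRbip⟩
  lift X to Finset V using X.toFinite
  obtain rfl : Y = ↑Xᶜ := by
    rw [coe_compl]; exact (IsCompl.of_eq hdisj.eq_bot hpart).compl_eq.symm
  have hn : #X + #Xᶜ = Fintype.card V := card_add_card_compl X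
  refine ⟨?_, ?_⟩
  · rw [h.ncard_edgeSet_Hconstr, Nat.mul_eq_add_sq_div_four hbal.1 hbal.2, Set.ncard_coe_finset,
      Set.ncard_coe_finset, hn, heP, heQ]
    ring
  · have hcount := h.ncard_cliqueSet_three_Hconstr
    rw [← coe_edgeFinset, Set.ncard_coe_finset] at heP heQ
    rw [heP, heQ] at hcount
    rw [← hn]
    linarith

/-- Edge and triangle counts of `H_n(P,Q,R)` for a `k`-admissible triple with
`e(P) = e(Q) = f(k-1,k-1)`:
`e(H) = ⌊n²/4⌋ − |A||B| + e(R) + 2f(k-1,k-1)` and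
`N(K₃,H) = f(k-1,k-1)(n − |A| − |B|) + N(K₃,P) + N(K₃,Q) + τ_R(P,Q)`
(both stated with the subtracted terms moved to the left-hand side). -/
theorem Hconstr_counts {V : Type*} [Fintype V] [DecidableEq V] (k : ℕ) (hk : 3 ≤ k)
    (X Y A B : Set V) (P Q R : SimpleGraph V)
    [DecidableRel P.Adj] [DecidableRel Q.Adj]
    (hpart : X ∪ Y = Set.univ) (hdisj : Disjoint X Y)
    (hbal : X.ncard ≤ Y.ncard + 1 ∧ Y.ncard ≤ X.ncard + 1)
    (hAX : A ⊆ X) (hBY : B ⊆ Y)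
    (hPA : ∀ u v, P.Adj u v → u ∈ A ∧ v ∈ A)
    (hQB : ∀ u v, Q.Adj u v → u ∈ B ∧ v ∈ B)
    (hPiso : ∀ a ∈ A, ∃ u, P.Adj a u)
    (hQiso : ∀ b ∈ B, ∃ u, Q.Adj b u)
    (hPnu : nu P ≤ k - 1) (hQnu : nu Q ≤ k - 1)
    (hPdeg : ∀ v, (P.neighborSet v).ncard ≤ k - 1)
    (hQdeg : ∀ v, (Q.neighborSet v).ncard ≤ k - 1)
    (hRbip : ∀ u v, R.Adj u v → (u ∈ A ∧ v ∈ B) ∨ (u ∈ B ∧ v ∈ A))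
    (hadmA : ∀ a ∈ A, (P.neighborSet a).ncard + nuOn Q (R.neighborSet a) ≤ k - 1)
    (hadmB : ∀ b ∈ B, (Q.neighborSet b).ncard + nuOn P (R.neighborSet b) ≤ k - 1)
    (heP : P.edgeSet.ncard = fCH k) (heQ : Q.edgeSet.ncard = fCH k)
    (hn : A.ncard + B.ncard ≤ Fintype.card V) :
    (Hconstr X Y A B P Q R).edgeSet.ncard + A.ncard * B.ncard =
        (Fintype.card V) ^ 2 / 4 + R.edgeSet.ncard + 2 * fCH k ∧
      ((Hconstr X Y A B P Q R).cliqueSet 3).ncard + fCH k * (A.ncard + B.ncard) =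
        fCH k * Fintype.card V + ((P.cliqueSet 3).ncard + (Q.cliqueSet 3).ncard) +
          ((∑ e ∈ P.edgeFinset, ({v : V | ∀ u ∈ e, R.Adj u v}).ncard) +
            ∑ e ∈ Q.edgeFinset, ({v : V | ∀ u ∈ e, R.Adj u v}).ncard) :=
  Hconstr_counts_general k X Y A B P Q R hpart hdisj hbal hAX hBY hPA hQB hRbip heP heQ
end

section
/- Let k ≥ 1 and let x_1, ..., x_k be k distinct neighbors of a vertex x inside a set X, in a graph G with partition V(G) = X ∪ Y. Suppose each pair {x, x_i} has at least |Y| − β common neighbors in Y, and |Y| > kβ + k. Then there exist distinct vertices y_1, ..., y_k ∈ Y with y_i adjacent to both x and x_i for each i, and hence G contains a copy of F_k centered at x. -/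
open SimpleGraph

open Finset in
theorem exists_injective_forall_mem_of_card_le_ncard {ι α : Type*} [Fintype ι] {N : ι → Set α}
    (hN : ∀ i, Fintype.card ι ≤ (N i).ncard) :
    ∃ f : ι → α, Function.Injective f ∧ ∀ i, f i ∈ N i := by
  classical
  cases isEmpty_or_nonempty ι
  · exact ⟨isEmptyElim, Function.injective_of_subsingleton _, isEmptyElim⟩
  have hfin (i : ι) : (N i).Finite := Set.finite_of_ncard_pos (Fintype.card_pos.trans_le (hN i))
  have hall (s : Finset ι) : #s ≤ #(s.biUnion fun i => (hfin i).toFinset) := by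
    rcases s.eq_empty_or_nonempty with rfl | ⟨i, hi⟩
    · simp
    calc #s ≤ Fintype.card ι := card_le_univ s
      _ ≤ (N i).ncard := hN i
      _ = #(hfin i).toFinset := Set.ncard_eq_toFinset_card _ (hfin i)
      _ ≤ _ := card_le_card (subset_biUnion_of_mem (fun i => (hfin i).toFinset) hi)
  obtain ⟨f, hf, hmem⟩ := (all_card_le_biUnion_card_iff_exists_injective _).mp hall
  exact ⟨f, hf, fun i => (hfin i).mem_toFinset.mp (hmem i)⟩

namespace friendshipGraph

variable {V : Type*} {G : SimpleGraph V} {k : ℕ} {x : V} {xs ys : Fin k → V}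

def vertexMap (x : V) (xs ys : Fin k → V) : Option (Fin k × Fin 2) → V
  | none => x
  | some (i, j) => ![xs i, ys i] j

theorem adj_vertexMap_none (hx : ∀ i, G.Adj x (xs i)) (hy : ∀ i, G.Adj x (ys i))
    {a : Option (Fin k × Fin 2)} (ha : a ≠ none) : G.Adj x (vertexMap x xs ys a) := by
  rcases a with _ | ⟨i, j⟩
  · contradiction
  fin_cases j
  exacts [hx i, hy i]

def hom (hx : ∀ i, G.Adj x (xs i)) (hy : ∀ i, G.Adj x (ys i))
    (hxy : ∀ i, G.Adj (xs i) (ys i)) : friendshipGraph k →g G where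
  toFun := vertexMap x xs ys
  map_rel' := by
    have key {a b} (hne : a ≠ b) (h : a = none ∨ b = none ∨ ∃ i, a = some (i, 0) ∧ b = some (i, 1)) :
        G.Adj (vertexMap x xs ys a) (vertexMap x xs ys b) := by
      rcases h with rfl | rfl | ⟨i, rfl, rfl⟩
      · exact adj_vertexMap_none hx hy hne.symm
      · exact (adj_vertexMap_none hx hy hne).symm
      · exact hxy i
    rintro a b ⟨hne, h | h⟩
    exacts [key hne h, (key hne.symm h).symm]

theorem vertexMap_injective (hx : ∀ i, G.Adj x (xs i)) (hy : ∀ i, G.Adj x (ys i))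
    (hxs : Function.Injective xs) (hys : Function.Injective ys) (hne : ∀ i j, xs i ≠ ys j) :
    Function.Injective (vertexMap x xs ys) := by
  rintro (_ | ⟨i, j⟩) (_ | ⟨i', j'⟩) h
  · rfl
  · exact absurd h (adj_vertexMap_none hx hy (Option.some_ne_none _)).ne
  · exact absurd h.symm (adj_vertexMap_none hx hy (Option.some_ne_none _)).ne
  fin_cases j <;> fin_cases j' <;>
    simp only [vertexMap, Fin.zero_eta, Fin.mk_one, Matrix.cons_val_zero, Matrix.cons_val_one,
      Matrix.cons_val_fin_one, Option.some.injEq, Prod.mk.injEq, and_true] at h ⊢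
  exacts [hxs h, (hne _ _ h).elim, (hne _ _ h.symm).elim, hys h]

end friendshipGraph

theorem greedy_center_general {V : Type*} (k β : ℕ)
    (G : SimpleGraph V) (X Y : Set V)
    (hdisj : Disjoint X Y)
    (x : V) (xs : Fin k → V) (hinj : Function.Injective xs)
    (hxs : ∀ i, xs i ∈ X ∧ G.Adj x (xs i))
    (hcn : ∀ i, Y.ncard - β ≤ ((G.neighborSet x ∩ G.neighborSet (xs i)) ∩ Y).ncard)
    (hY : k * β + k < Y.ncard) :
    (∃ ys : Fin k → V, Function.Injective ys ∧
        ∀ i, ys i ∈ Y ∧ G.Adj x (ys i) ∧ G.Adj (xs i) (ys i)) ∧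
      ∃ f : friendshipGraph k →g G, Function.Injective ⇑f ∧ f none = x := by
  have hkY : k ≤ Y.ncard - β := by
    rcases k.eq_zero_or_pos with rfl | hpos
    · exact Nat.zero_le _
    have := Nat.le_mul_of_pos_left β hpos
    omega
  obtain ⟨ys, hys, hmem⟩ := exists_injective_forall_mem_of_card_le_ncard
    (N := fun i => G.neighborSet x ∩ G.neighborSet (xs i) ∩ Y)
    fun i => (Fintype.card_fin k).trans_le (hkY.trans (hcn i))
  have hne (i j : Fin k) : xs i ≠ ys j := hdisj.ne_of_mem (hxs i).1 (hmem j).2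
  have hxxs i : G.Adj x (xs i) := (hxs i).2
  have hxys i : G.Adj x (ys i) := (hmem i).1.1
  have hxsys i : G.Adj (xs i) (ys i) := (hmem i).1.2
  exact ⟨⟨ys, hys, fun i => ⟨(hmem i).2, hxys i, hxsys i⟩⟩, friendshipGraph.hom hxxs hxys hxsys,
    friendshipGraph.vertexMap_injective hxxs hxys hinj hys hne, rfl⟩

/-- Greedy construction of an `F_k` centered at `x`: if `x₁,…,x_k` are distinct neighbors
of `x` inside `X`, each pair `{x,xᵢ}` has at least `|Y| − β` common neighbors in `Y`, and
`|Y| > kβ + k`, then there are distinct `y₁,…,y_k ∈ Y` completing `k` triangles, so `G`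
contains a copy of `F_k` centered at `x`. -/
theorem greedy_center {V : Type*} [Fintype V] (k β : ℕ) (hk : 1 ≤ k)
    (G : SimpleGraph V) (X Y : Set V)
    (hpart : X ∪ Y = Set.univ) (hdisj : Disjoint X Y)
    (x : V) (hx : x ∈ X) (xs : Fin k → V) (hinj : Function.Injective xs)
    (hxs : ∀ i, xs i ∈ X ∧ G.Adj x (xs i))
    (hcn : ∀ i, Y.ncard - β ≤ ((G.neighborSet x ∩ G.neighborSet (xs i)) ∩ Y).ncard)
    (hY : k * β + k < Y.ncard) :
    (∃ ys : Fin k → V, Function.Injective ys ∧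
        ∀ i, ys i ∈ Y ∧ G.Adj x (ys i) ∧ G.Adj (xs i) (ys i)) ∧
      ∃ f : friendshipGraph k →g G, Function.Injective ⇑f ∧ f none = x :=
  greedy_center_general k β G X Y hdisj x xs hinj hxs hcn hY
end
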